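/- For every positive integer L and every set S = {a_1, …, a_r} ⊆ {1, …, L−1}, the graph induced by all vertices of the (S, L)-Verifier gadget other than s_1, t_1, e_v, e_w, o_x, o_y (with all arcs among these vertices) admits a path decomposition of width at most 9 whose first bag contains {u, v, w} and whose last bag contains {x, y, z}. -/

import Mathlib

/-!
Lay the non-core vertices out along one path: the paths of the Gate copies
`G_0^1, G_0^2, G_1^1, G_1^2, …` are concatenated, block `j` occupying positions
`2Lj, …, 2Lj + 2L - 1` with `G_j^2` starting at `2Lj + 2a_j`, and the vertex at position `g`
goes into bags `g - 1` and `g`. The two hubs `v, w` of a Gate whose path starts at `o` and has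
`2b` vertices stay in the bags `o - 1, …, o + 2b - 2`, i.e. while the window is on that Gate's
path, and `u, …, z` lie in every bag. Every arc then joins two vertices whose bag intervals
meet, and a bag consists of the six core vertices, two consecutive path vertices (of different
parity) and the two hubs of a single Gate: ten vertices.
-/

abbrev GateIntV (b : ℕ) := (Fin (2 * b)) ⊕ (Fin 2)

/-- Untyped index of a Gate internal vertex. -/
def gIdx {b : ℕ} : GateIntV b → ℕ ⊕ Fin 2
  | Sum.inl j => Sum.inl (j : ℕ)
  | Sum.inr i => Sum.inr i

/-- Capacities of the arcs inside a Gate gadget, on untyped indices. -/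
def gcapIdx : (ℕ ⊕ Fin 2) → (ℕ ⊕ Fin 2) → ℕ
  | Sum.inl j, Sum.inl j' => if j' = j + 1 then 1 else 0
  | Sum.inr i, Sum.inl j => if i = 0 ∧ j % 2 = 0 then 1 else 0
  | Sum.inl j, Sum.inr i => if i = 1 ∧ j % 2 = 1 then 1 else 0
  | Sum.inr _, Sum.inr _ => 0

/-- Vertices of the `(S, L)`-Verifier gadget for `S = {a 0, …, a (r-1)}`:
core vertices `Sum.inl i` with `0 = u`, `1 = v`, `2 = w`, `3 = x`, `4 = y`,
`5 = z`, `6 = s₁`, `7 = t₁`, `8 = e_v`, `9 = e_w`, `10 = o_x`, `11 = o_y`;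
`Sum.inr (Sum.inl ⟨j, g⟩)` is vertex `g` of the Gate copy `G_j^1` (an
`a j`-Gate) and `Sum.inr (Sum.inr ⟨j, g⟩)` is vertex `g` of the copy `G_j^2`
(an `(L - a j)`-Gate). -/
abbrev VerV (L r : ℕ) (a : Fin r → ℕ) :=
  (Fin 12) ⊕ ((Σ j : Fin r, GateIntV (a j)) ⊕ (Σ j : Fin r, GateIntV (L - a j)))

/-- Arc capacities of the `(S, L)`-Verifier gadget (capacity `0` = no arc). -/
def verCap (L r : ℕ) (a : Fin r → ℕ) : VerV L r a → VerV L r a → ℕ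
  | Sum.inl i, Sum.inl i' =>
      if i = 6 ∧ i' = 0 then r - 1
      else if i = 5 ∧ i' = 7 then r - 1
      else if i = 8 ∧ i' = 1 then L - 1
      else if i = 9 ∧ i' = 2 then L - 1
      else if i = 3 ∧ i' = 10 then L - 1
      else if i = 4 ∧ i' = 11 then L - 1
      else 0
  | Sum.inl i, Sum.inr (Sum.inl ⟨j, g⟩) =>
      (match gIdx g with
      | Sum.inl p => if i = 0 ∧ p = 0 then 1 else 0
      | Sum.inr q => if i = 1 ∧ q = 0 then a j else 0)
  | Sum.inl i, Sum.inr (Sum.inr ⟨j, g⟩) =>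
      (match gIdx g with
      | Sum.inl _ => 0
      | Sum.inr q => if i = 2 ∧ q = 0 then L - a j else 0)
  | Sum.inr (Sum.inl ⟨j, g⟩), Sum.inl i =>
      (match gIdx g with
      | Sum.inl _ => 0
      | Sum.inr q => if q = 1 ∧ i = 3 then a j else 0)
  | Sum.inr (Sum.inr ⟨j, g⟩), Sum.inl i =>
      (match gIdx g with
      | Sum.inl p => if p = 2 * (L - a j) - 1 ∧ i = 5 then 1 else 0
      | Sum.inr q => if q = 1 ∧ i = 4 then L - a j else 0)
  | Sum.inr (Sum.inl ⟨j, g⟩), Sum.inr (Sum.inl ⟨j', g'⟩) =>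
      if (j : ℕ) = (j' : ℕ) then gcapIdx (gIdx g) (gIdx g') else 0
  | Sum.inr (Sum.inl ⟨j, g⟩), Sum.inr (Sum.inr ⟨j', g'⟩) =>
      (match gIdx g, gIdx g' with
      | Sum.inl p, Sum.inl p' =>
          if (j : ℕ) = (j' : ℕ) ∧ p = 2 * (a j) - 1 ∧ p' = 0 then 1 else 0
      | _, _ => 0)
  | Sum.inr (Sum.inr _), Sum.inr (Sum.inl _) => 0
  | Sum.inr (Sum.inr ⟨j, g⟩), Sum.inr (Sum.inr ⟨j', g'⟩) =>
      if (j : ℕ) = (j' : ℕ) then gcapIdx (gIdx g) (gIdx g') else 0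

/-- The vertices of the Verifier gadget other than `s₁, t₁, e_v, e_w, o_x, o_y`:
core vertices `Sum.inl i` with `0 = u`, `1 = v`, `2 = w`, `3 = x`, `4 = y`,
`5 = z`, together with the vertices of the Gate copies. -/
abbrev VerIntV (L r : ℕ) (a : Fin r → ℕ) :=
  (Fin 6) ⊕ ((Σ j : Fin r, GateIntV (a j)) ⊕ (Σ j : Fin r, GateIntV (L - a j)))

/-- Embedding of the internal vertices into the full Verifier gadget. -/
def verEmb (L r : ℕ) (a : Fin r → ℕ) : VerIntV L r a → VerV L r a
  | Sum.inl i => Sum.inl (Fin.castLE (by omega) i)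
  | Sum.inr g => Sum.inr g

/-- A path decomposition of the directed graph on `V` with arc relation `Adj`,
with bags `X 0, …, X r`. -/
def IsPathDecomp {V : Type*} (Adj : V → V → Prop) {r : ℕ}
    (X : Fin (r + 1) → Finset V) : Prop :=
  (∀ v, ∃ i, v ∈ X i) ∧
  (∀ u v, Adj u v → ∃ i, u ∈ X i ∧ v ∈ X i) ∧
  (∀ v (i j k : Fin (r + 1)), i ≤ j → j ≤ k → v ∈ X i → v ∈ X k → v ∈ X j)

namespace VerifierGadget

theorem eq_of_mem_Ico_mul {n j j' t : ℕ} (h : t ∈ Set.Ico (n * j) (n * j + n))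
    (h' : t ∈ Set.Ico (n * j') (n * j' + n)) : j = j' := by
  have key : ∀ {k}, t ∈ Set.Ico (n * k) (n * k + n) → t / n = k := fun hk =>
    Nat.div_eq_of_lt_le (by rw [mul_comm]; exact hk.1)
      (by rw [add_mul, one_mul, mul_comm]; exact hk.2)
  rw [← key h, key h']

section IntervalBags

variable {V : Type*} [Fintype V]

def intervalBags (first last : V → ℕ) (m : ℕ) (i : Fin (m + 1)) : Finset V :=
  Finset.univ.filter fun v => first v ≤ i ∧ (i : ℕ) ≤ last v

theorem mem_intervalBags {first last : V → ℕ} {m : ℕ} {i : Fin (m + 1)} {v : V} :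
    v ∈ intervalBags first last m i ↔ first v ≤ i ∧ (i : ℕ) ≤ last v := by
  simp [intervalBags]

theorem isPathDecomp_intervalBags {Adj : V → V → Prop} {first last : V → ℕ} {m : ℕ}
    (hle : ∀ v, first v ≤ last v) (hm : ∀ v, last v ≤ m)
    (hadj : ∀ u v, Adj u v → first u ≤ last v ∧ first v ≤ last u) :
    IsPathDecomp Adj (intervalBags first last m) := by
  refine ⟨fun v => ?_, fun u v huv => ?_, fun v i j k hij hjk hi hk => ?_⟩
  · exact ⟨⟨first v, Nat.lt_succ_of_le ((hle v).trans (hm v))⟩,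
      mem_intervalBags.2 ⟨le_rfl, hle v⟩⟩
  · obtain ⟨h₁, h₂⟩ := hadj u v huv
    refine ⟨⟨max (first u) (first v), Nat.lt_succ_of_le <|
      max_le ((hle u).trans (hm u)) ((hle v).trans (hm v))⟩, ?_, ?_⟩
    · exact mem_intervalBags.2 ⟨le_max_left _ _, max_le (hle u) h₂⟩
    · exact mem_intervalBags.2 ⟨le_max_right _ _, max_le h₁ (hle v)⟩
  · rw [mem_intervalBags] at hi hk ⊢
    exact ⟨hi.1.trans hij, (Fin.le_def.1 hjk).trans hk.2⟩

end IntervalBags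

section Gate

variable {b : ℕ}

def gateFirstBag (o : ℕ) : GateIntV b → ℕ
  | Sum.inl k => o + k - 1
  | Sum.inr _ => o - 1

def gateLastBag (o : ℕ) : GateIntV b → ℕ
  | Sum.inl k => o + k
  | Sum.inr _ => o + 2 * b - 2

def gateSlot (o : ℕ) : GateIntV b → Fin 2 ⊕ Fin 2
  | Sum.inl k => Sum.inl ⟨(o + k) % 2, Nat.mod_lt _ two_pos⟩
  | Sum.inr q => Sum.inr q

theorem gateFirstBag_le_gateLastBag (hb : 0 < b) (o : ℕ) (x : GateIntV b) :
    gateFirstBag o x ≤ gateLastBag o x := by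
  cases x <;> simp only [gateFirstBag, gateLastBag] <;> omega

theorem gateLastBag_lt (hb : 0 < b) (o : ℕ) (x : GateIntV b) :
    gateLastBag o x < o + 2 * b := by
  rcases x with k | _ <;> simp only [gateLastBag]
  · exact Nat.add_lt_add_left k.isLt o
  · omega

theorem gate_overlap_of_gcapIdx_pos (o : ℕ) {x y : GateIntV b}
    (h : 0 < gcapIdx (gIdx x) (gIdx y)) :
    gateFirstBag o x ≤ gateLastBag o y ∧ gateFirstBag o y ≤ gateLastBag o x := by
  rcases x with k | q <;> rcases y with k' | q' <;>
    simp only [gIdx, gcapIdx, gateFirstBag, gateLastBag] at h ⊢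
  · split_ifs at h <;> omega
  · have := k.isLt
    split_ifs at h <;> omega
  · have := k'.isLt; omega
  · omega

theorem exists_mem_Ico_of_gateSlot_eq {b' o o' t : ℕ} (hb : 0 < b) (hb' : 0 < b')
    {x : GateIntV b} {y : GateIntV b'}
    (hx : gateFirstBag o x ≤ t ∧ t ≤ gateLastBag o x)
    (hy : gateFirstBag o' y ≤ t ∧ t ≤ gateLastBag o' y)
    (h : gateSlot o x = gateSlot o' y) :
    ∃ n, n ∈ Set.Ico o (o + 2 * b) ∧ n ∈ Set.Ico o' (o' + 2 * b') := by
  rcases x with k | q <;> rcases y with k' | q' <;>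
    simp only [gateSlot, gateFirstBag, gateLastBag, Sum.inl.injEq, Sum.inr.injEq, Fin.mk.injEq,
      reduceCtorEq] at h hx hy
  · have := k.isLt; have := k'.isLt
    exact ⟨o + k, ⟨by omega, by omega⟩, ⟨by omega, by omega⟩⟩
  · exact ⟨t + 1, ⟨by omega, by omega⟩, ⟨by omega, by omega⟩⟩

theorem eq_of_gateSlot_eq {o t : ℕ} {x y : GateIntV b}
    (hx : gateFirstBag o x ≤ t ∧ t ≤ gateLastBag o x)
    (hy : gateFirstBag o y ≤ t ∧ t ≤ gateLastBag o y)
    (h : gateSlot o x = gateSlot o y) : x = y := by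
  rcases x with k | q <;> rcases y with k' | q' <;>
    simp only [gateSlot, gateFirstBag, gateLastBag, Sum.inl.injEq, Sum.inr.injEq, Fin.mk.injEq,
      reduceCtorEq] at h hx hy ⊢
  · exact Fin.ext (by omega)
  · exact h

end Gate

section Verifier

variable {L r : ℕ} {a : Fin r → ℕ}

def firstBag (L : ℕ) (a : Fin r → ℕ) : VerIntV L r a → ℕ
  | Sum.inl _ => 0
  | Sum.inr (Sum.inl ⟨j, x⟩) => gateFirstBag (2 * L * j) x
  | Sum.inr (Sum.inr ⟨j, x⟩) => gateFirstBag (2 * L * j + 2 * a j) x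

def lastBag (L : ℕ) (a : Fin r → ℕ) : VerIntV L r a → ℕ
  | Sum.inl _ => 2 * L * r
  | Sum.inr (Sum.inl ⟨j, x⟩) => gateLastBag (2 * L * j) x
  | Sum.inr (Sum.inr ⟨j, x⟩) => gateLastBag (2 * L * j + 2 * a j) x

def slot (L : ℕ) (a : Fin r → ℕ) : VerIntV L r a → Fin 6 ⊕ Fin 2 ⊕ Fin 2
  | Sum.inl i => Sum.inl i
  | Sum.inr (Sum.inl ⟨j, x⟩) => Sum.inr (gateSlot (2 * L * j) x)
  | Sum.inr (Sum.inr ⟨j, x⟩) => Sum.inr (gateSlot (2 * L * j + 2 * a j) x)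

variable (ha : ∀ j, 0 < a j ∧ a j < L)
include ha

theorem firstBag_le_lastBag (v : VerIntV L r a) : firstBag L a v ≤ lastBag L a v := by
  rcases v with _ | (⟨j, x⟩ | ⟨j, x⟩)
  · exact Nat.zero_le _
  · exact gateFirstBag_le_gateLastBag (ha j).1 _ x
  · exact gateFirstBag_le_gateLastBag (Nat.sub_pos_of_lt (ha j).2) _ x

theorem lastBag_le (v : VerIntV L r a) : lastBag L a v ≤ 2 * L * r := by
  have hblock (j : Fin r) : 2 * L * j + 2 * L ≤ 2 * L * r := by
    simpa [mul_add] using Nat.mul_le_mul_left (2 * L) j.isLt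
  rcases v with _ | (⟨j, x⟩ | ⟨j, x⟩)
  · exact le_rfl
  · have := gateLastBag_lt (ha j).1 (2 * L * j) x
    have := hblock j
    have := (ha j).2
    simp only [lastBag]; omega
  · have := gateLastBag_lt (Nat.sub_pos_of_lt (ha j).2) (2 * L * j + 2 * a j) x
    have := hblock j
    have := (ha j).2
    simp only [lastBag]; omega

theorem overlap_of_verCap_pos {u v : VerIntV L r a}
    (h : 0 < verCap L r a (verEmb L r a u) (verEmb L r a v)) :
    firstBag L a u ≤ lastBag L a v ∧ firstBag L a v ≤ lastBag L a u := by
  have hcore (i : Fin 6) (w : VerIntV L r a) :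
      firstBag L a (Sum.inl i) ≤ lastBag L a w ∧ firstBag L a w ≤ lastBag L a (Sum.inl i) :=
    ⟨Nat.zero_le _, (firstBag_le_lastBag ha w).trans (lastBag_le ha w)⟩
  rcases u with i | (⟨j, x⟩ | ⟨j, x⟩)
  · exact hcore i v
  all_goals rcases v with i' | (⟨j', y⟩ | ⟨j', y⟩)
  all_goals first
    | exact (hcore i' _).symm
    | simp only [verEmb, verCap] at h
  · split_ifs at h with hj
    · obtain rfl := Fin.ext hj
      exact gate_overlap_of_gcapIdx_pos _ h
    · omega
  · rcases x with k | q <;> rcases y with k' | q' <;> simp only [gIdx] at h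
    · split_ifs at h with hkk
      · obtain ⟨hj, hk, hk'⟩ := hkk
        obtain rfl := Fin.ext hj
        have := (ha j).1
        simp only [firstBag, lastBag, gateFirstBag, gateLastBag]
        omega
      · omega
    all_goals omega
  · omega
  · split_ifs at h with hj
    · obtain rfl := Fin.ext hj
      exact gate_overlap_of_gcapIdx_pos _ h
    · omega

theorem slot_injOn (t : ℕ) :
    Set.InjOn (slot L a) {v | firstBag L a v ≤ t ∧ t ≤ lastBag L a v} := by
  have hblock {j j' : Fin r} {n : ℕ} (h : n ∈ Set.Ico (2 * L * j) (2 * L * j + 2 * L))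
      (h' : n ∈ Set.Ico (2 * L * j') (2 * L * j' + 2 * L)) : j = j' :=
    Fin.ext (eq_of_mem_Ico_mul h h')
  have hpos (j : Fin r) : 0 < a j ∧ 0 < L - a j := ⟨(ha j).1, Nat.sub_pos_of_lt (ha j).2⟩
  intro v hv w hw h
  rcases v with i | (⟨j, x⟩ | ⟨j, x⟩) <;> rcases w with i' | (⟨j', y⟩ | ⟨j', y⟩) <;>
    simp only [slot, Sum.inl.injEq, Sum.inr.injEq, reduceCtorEq] at h
  · rw [h]
  all_goals
    simp only [Set.mem_ofPred_eq, firstBag, lastBag] at hv hw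
    obtain ⟨n, ⟨hn₁, hn₂⟩, ⟨hn₁', hn₂'⟩⟩ :=
      exists_mem_Ico_of_gateSlot_eq (by simp [hpos]) (by simp [hpos]) hv hw h
    have := (ha j).2
    have := (ha j').2
    obtain rfl : j = j' := hblock (n := n) ⟨by omega, by omega⟩ ⟨by omega, by omega⟩
  · rw [eq_of_gateSlot_eq hv hw h]
  · omega
  · omega
  · rw [eq_of_gateSlot_eq hv hw h]

theorem card_intervalBags_le {m : ℕ} (i : Fin (m + 1)) :
    (intervalBags (firstBag L a) (lastBag L a) m i).card ≤ 10 :=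
  calc _ ≤ (Finset.univ : Finset (Fin 6 ⊕ Fin 2 ⊕ Fin 2)).card :=
        Finset.card_le_card_of_injOn (slot L a) (fun _ _ => Finset.mem_coe.2 (Finset.mem_univ _))
          fun _ hv _ hw => slot_injOn ha i (mem_intervalBags.1 hv) (mem_intervalBags.1 hw)
    _ = 10 := rfl

end Verifier

end VerifierGadget

open VerifierGadget

theorem verifier_gadget_pathwidth_general (L r : ℕ)
    (a : Fin r → ℕ)
    (hrange : ∀ j, 1 ≤ a j ∧ a j ≤ L - 1) :
    ∃ (m : ℕ) (X : Fin (m + 1) → Finset (VerIntV L r a)),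
      IsPathDecomp
        (fun u v => 0 < verCap L r a (verEmb L r a u) (verEmb L r a v)) X ∧
      (∀ i, (X i).card ≤ 9 + 1) ∧
      (Sum.inl 0 : VerIntV L r a) ∈ X 0 ∧
      (Sum.inl 1 : VerIntV L r a) ∈ X 0 ∧
      (Sum.inl 2 : VerIntV L r a) ∈ X 0 ∧
      (Sum.inl 3 : VerIntV L r a) ∈ X (Fin.last m) ∧
      (Sum.inl 4 : VerIntV L r a) ∈ X (Fin.last m) ∧
      (Sum.inl 5 : VerIntV L r a) ∈ X (Fin.last m) := by
  have ha (j : Fin r) : 0 < a j ∧ a j < L := by have := hrange j; omega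
  refine ⟨2 * L * r, intervalBags (firstBag L a) (lastBag L a) (2 * L * r),
    isPathDecomp_intervalBags (firstBag_le_lastBag ha) (lastBag_le ha)
      (fun _ _ => overlap_of_verCap_pos ha),
    card_intervalBags_le ha, ?_⟩
  simp [mem_intervalBags, firstBag, lastBag]

/-- Lemma 3.7: the internal part of the `(S, L)`-Verifier gadget has a path
decomposition of width 9 with `u, v, w` in the first bag and `x, y, z` in the
last bag. -/
theorem verifier_gadget_pathwidth (L r : ℕ) (hL : 0 < L) (hr : 1 ≤ r)
    (a : Fin r → ℕ) (hinj : Function.Injective a)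
    (hrange : ∀ j, 1 ≤ a j ∧ a j ≤ L - 1) :
    ∃ (m : ℕ) (X : Fin (m + 1) → Finset (VerIntV L r a)),
      IsPathDecomp
        (fun u v => 0 < verCap L r a (verEmb L r a u) (verEmb L r a v)) X ∧
      (∀ i, (X i).card ≤ 9 + 1) ∧
      (Sum.inl 0 : VerIntV L r a) ∈ X 0 ∧
      (Sum.inl 1 : VerIntV L r a) ∈ X 0 ∧
      (Sum.inl 2 : VerIntV L r a) ∈ X 0 ∧
      (Sum.inl 3 : VerIntV L r a) ∈ X (Fin.last m) ∧
      (Sum.inl 4 : VerIntV L r a) ∈ X (Fin.last m) ∧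
      (Sum.inl 5 : VerIntV L r a) ∈ X (Fin.last m) :=
  verifier_gadget_pathwidth_general L r a hrange
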